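/- arXiv:1702.05317 — 4 statements merged into one kernel-verified Lean document; each statement's English description precedes it below -/
import Mathlib

section
/- Let k ∈ ℂ and define G^k : ℝ³ \ {0} → ℂ by G^k(x) = −e^{ik|x|}/(4π|x|). Then for every x ∈ ℝ³ with x ≠ 0, G^k is smooth in a neighborhood of x and satisfies the Helmholtz equation Δ G^k(x) + k² G^k(x) = 0, where Δ denotes the Laplacian on ℝ³. -/
open Complex Real


/-- The Laplacian of a function `f : ℝ³ → ℂ`, defined as the sum of the second
partial derivatives along the coordinate directions. -/
noncomputable def laplacian (f : EuclideanSpace ℝ (Fin 3) → ℂ)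
    (x : EuclideanSpace ℝ (Fin 3)) : ℂ :=
  ∑ i : Fin 3,
    fderiv ℝ (fun y => fderiv ℝ f y (EuclideanSpace.single i 1)) x (EuclideanSpace.single i 1)

/-- The outgoing Green function of the Helmholtz equation in ℝ³:
`G^k(x) = -e^{ik|x|} / (4π|x|)`. -/
noncomputable def greenFn (k : ℂ) (x : EuclideanSpace ℝ (Fin 3)) : ℂ :=
  -Complex.exp (Complex.I * k * (‖x‖ : ℂ)) / ((4 * Real.pi * ‖x‖ : ℝ) : ℂ)

noncomputable def hAux (k : ℂ) (s : ℝ) : ℂ :=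
  -Complex.exp (Complex.I * k * (Real.sqrt s : ℂ)) / ((4 * Real.pi : ℂ) * (Real.sqrt s : ℂ))

noncomputable def hAux1 (k : ℂ) (s : ℝ) : ℂ :=
  -Complex.exp (Complex.I * k * (Real.sqrt s : ℂ)) * (Complex.I * k * (Real.sqrt s : ℂ) - 1) /
    (2 * (4 * Real.pi : ℂ) * (Real.sqrt s : ℂ) ^ 3)

noncomputable def hAux2 (k : ℂ) (s : ℝ) : ℂ :=
  -Complex.exp (Complex.I * k * (Real.sqrt s : ℂ)) *
      (-(k ^ 2) * (Real.sqrt s : ℂ) ^ 2 - 3 * Complex.I * k * (Real.sqrt s : ℂ) + 3) /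
    (4 * (4 * Real.pi : ℂ) * (Real.sqrt s : ℂ) ^ 5)

lemma sqrt_deriv_stuff {s : ℝ} (hs : 0 < s) :
    HasDerivAt (fun t : ℝ => ((Real.sqrt t : ℝ) : ℂ)) ((1 / (2 * Real.sqrt s) : ℝ) : ℂ) s :=
  (Real.hasDerivAt_sqrt hs.ne').ofReal_comp

lemma hasDerivAt_hAux (k : ℂ) {s : ℝ} (hs : 0 < s) : HasDerivAt (hAux k) (hAux1 k s) s := by
  have hu0 : Real.sqrt s ≠ 0 := (Real.sqrt_pos.2 hs).ne'
  have hu0' : ((Real.sqrt s : ℝ) : ℂ) ≠ 0 := by exact_mod_cast hu0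
  have hπ : (Real.pi : ℂ) ≠ 0 := by exact_mod_cast Real.pi_ne_zero
  have huC := sqrt_deriv_stuff hs
  have hexp := ((huC.const_mul (Complex.I * k)).cexp).neg
  have hden := huC.const_mul (4 * Real.pi : ℂ)
  have hdiv := hexp.div hden (by simp [hu0', hπ])
  convert hdiv using 1
  · rfl
  · rfl
  simp only [hAux1, Pi.neg_apply]
  push_cast
  field_simp
  ring

lemma hasDerivAt_hAux1 (k : ℂ) {s : ℝ} (hs : 0 < s) : HasDerivAt (hAux1 k) (hAux2 k s) s := by
  have hu0 : Real.sqrt s ≠ 0 := (Real.sqrt_pos.2 hs).ne'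
  have hu0' : ((Real.sqrt s : ℝ) : ℂ) ≠ 0 := by exact_mod_cast hu0
  have hπ : (Real.pi : ℂ) ≠ 0 := by exact_mod_cast Real.pi_ne_zero
  have huC := sqrt_deriv_stuff hs
  have harg := huC.const_mul (Complex.I * k)
  have hnum := (harg.cexp.neg).mul (harg.sub_const 1)
  have hden := ((huC.mul (huC.mul huC)).const_mul (2 * (4 * Real.pi : ℂ)))
  have hdiv := hnum.div hden (by simp [hu0', hπ])
  convert hdiv using 1
  · rfl
  · funext y
    simp only [hAux1, Pi.mul_apply, Pi.neg_apply, Pi.div_apply, Pi.pow_apply]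
    ring
  · simp only [hAux2, Pi.mul_apply, Pi.neg_apply, Pi.pow_apply]
    push_cast
    field_simp
    ring_nf
    simp only [Complex.I_sq]
    field_simp
    ring


lemma greenFn_eq_hAux (k : ℂ) (y : EuclideanSpace ℝ (Fin 3)) :
    greenFn k y = hAux k (‖y‖ ^ 2) := by
  simp only [greenFn, hAux, Real.sqrt_sq (norm_nonneg y)]
  push_cast
  ring_nf

lemma norm_sq_pos_of_ne {y : EuclideanSpace ℝ (Fin 3)} (hy : y ≠ 0) : 0 < ‖y‖ ^ 2 :=
  pow_pos (norm_pos_iff.2 hy) 2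

lemma hasFDerivAt_green (k : ℂ) {y : EuclideanSpace ℝ (Fin 3)} (hy : y ≠ 0) :
    HasFDerivAt (greenFn k)
      (((1 : ℝ →L[ℝ] ℝ).smulRight (hAux1 k (‖y‖ ^ 2))).comp (2 • innerSL ℝ y)) y := by
  have hN : HasFDerivAt (fun z : EuclideanSpace ℝ (Fin 3) => ‖z‖ ^ 2) (2 • innerSL ℝ y) y :=
    (hasStrictFDerivAt_norm_sq y).hasFDerivAt
  have hh := (hasDerivAt_hAux k (norm_sq_pos_of_ne hy)).hasFDerivAt
  have hcomp := hh.comp y hN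
  have : greenFn k = (hAux k ∘ fun z : EuclideanSpace ℝ (Fin 3) => ‖z‖ ^ 2) := by
    funext z; exact greenFn_eq_hAux k z
  rw [this]
  exact hcomp

lemma fderiv_green_apply (k : ℂ) {y : EuclideanSpace ℝ (Fin 3)} (hy : y ≠ 0) (i : Fin 3) :
    fderiv ℝ (greenFn k) y (EuclideanSpace.single i 1) =
      ((2 * y i : ℝ) : ℂ) * hAux1 k (‖y‖ ^ 2) := by
  rw [(hasFDerivAt_green k hy).fderiv]
  simp [Complex.real_smul, real_inner_comm, EuclideanSpace.inner_single_right]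
  ring

lemma second_deriv_green (k : ℂ) {x : EuclideanSpace ℝ (Fin 3)} (hx : x ≠ 0) (i : Fin 3) :
    fderiv ℝ (fun y => fderiv ℝ (greenFn k) y (EuclideanSpace.single i 1)) x
        (EuclideanSpace.single i 1) =
      2 * hAux1 k (‖x‖ ^ 2) +
        ((2 * x i : ℝ) : ℂ) * (((2 * x i : ℝ) : ℂ) * hAux2 k (‖x‖ ^ 2)) := by
  have hEV : (fun y => fderiv ℝ (greenFn k) y (EuclideanSpace.single i 1)) =ᶠ[nhds x]
      (fun y => ((2 * y i : ℝ) : ℂ) * hAux1 k (‖y‖ ^ 2)) := by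
    filter_upwards [IsOpen.mem_nhds isOpen_compl_singleton (by simpa using hx :
        x ∈ ({0} : Set (EuclideanSpace ℝ (Fin 3)))ᶜ)] with y hy
    exact fderiv_green_apply k (by simpa using hy) i
  rw [hEV.fderiv_eq]
  have hN : HasFDerivAt (fun z : EuclideanSpace ℝ (Fin 3) => ‖z‖ ^ 2) (2 • innerSL ℝ x) x :=
    (hasStrictFDerivAt_norm_sq x).hasFDerivAt
  have ha : HasFDerivAt (fun y : EuclideanSpace ℝ (Fin 3) => ((2 * y i : ℝ) : ℂ))
      (Complex.ofRealCLM.comp ((2 : ℝ) • (EuclideanSpace.proj i : EuclideanSpace ℝ (Fin 3) →L[ℝ] ℝ))) x := by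
    have := (Complex.ofRealCLM.comp
      ((2 : ℝ) • (EuclideanSpace.proj i : EuclideanSpace ℝ (Fin 3) →L[ℝ] ℝ))).hasFDerivAt (x := x)
    convert this using 1
    funext y
    simp
  have hb : HasFDerivAt (fun y : EuclideanSpace ℝ (Fin 3) => hAux1 k (‖y‖ ^ 2))
      (((1 : ℝ →L[ℝ] ℝ).smulRight (hAux2 k (‖x‖ ^ 2))).comp (2 • innerSL ℝ x)) x := by
    exact ((hasDerivAt_hAux1 k (norm_sq_pos_of_ne hx)).hasFDerivAt).comp x hN
  rw [HasFDerivAt.fderiv (f := fun y : EuclideanSpace ℝ (Fin 3) => ((2 * y i : ℝ) : ℂ) * hAux1 k (‖y‖ ^ 2)) (ha.mul hb)]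
  simp [Complex.real_smul, real_inner_comm, EuclideanSpace.inner_single_right]
  ring

lemma helmholtz_alg (k : ℂ) {s : ℝ} (hs : 0 < s) :
    6 * hAux1 k s + 4 * (s : ℂ) * hAux2 k s + k ^ 2 * hAux k s = 0 := by
  have hu0 : Real.sqrt s ≠ 0 := (Real.sqrt_pos.2 hs).ne'
  have hu0' : ((Real.sqrt s : ℝ) : ℂ) ≠ 0 := by exact_mod_cast hu0
  have hπ : (Real.pi : ℂ) ≠ 0 := by exact_mod_cast Real.pi_ne_zero
  have hsc : (s : ℂ) = ((Real.sqrt s : ℝ) : ℂ) ^ 2 := by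
    exact_mod_cast (Real.sq_sqrt hs.le).symm
  rw [hsc]
  simp only [hAux, hAux1, hAux2]
  field_simp
  ring_nf

lemma sum_coord_sq (x : EuclideanSpace ℝ (Fin 3)) :
    ∑ i : Fin 3, (x i) ^ 2 = ‖x‖ ^ 2 := by
  rw [EuclideanSpace.norm_eq, Real.sq_sqrt (by positivity)]
  simp [Real.norm_eq_abs, sq_abs]

lemma green_contDiffAt (k : ℂ) {x : EuclideanSpace ℝ (Fin 3)} (hx : x ≠ 0) :
    ContDiffAt ℝ (⊤ : ℕ∞) (greenFn k) x := by
  have hnorm : ContDiffAt ℝ (⊤ : ℕ∞) (fun y : EuclideanSpace ℝ (Fin 3) => ‖y‖) x :=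
    contDiffAt_norm ℝ hx
  have hofreal : ContDiffAt ℝ (⊤ : ℕ∞) (fun y : EuclideanSpace ℝ (Fin 3) => ((‖y‖ : ℝ) : ℂ)) x :=
    Complex.ofRealCLM.contDiff.contDiffAt.comp x hnorm
  have hexp : ContDiffAt ℝ (⊤ : ℕ∞)
      (fun y : EuclideanSpace ℝ (Fin 3) => Complex.exp (Complex.I * k * (‖y‖ : ℂ))) x :=
    (Complex.contDiff_exp (𝕜 := ℝ)).contDiffAt.comp x ((contDiffAt_const (c := Complex.I * k)).mul hofreal)
  have hden : ContDiffAt ℝ (⊤ : ℕ∞)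
      (fun y : EuclideanSpace ℝ (Fin 3) => ((4 * Real.pi * ‖y‖ : ℝ) : ℂ)) x :=
    Complex.ofRealCLM.contDiff.contDiffAt.comp x ((contDiffAt_const (c := (4 * Real.pi : ℝ))).mul hnorm)
  have h0 : ((4 * Real.pi * ‖x‖ : ℝ) : ℂ) ≠ 0 := by
    have : ‖x‖ ≠ 0 := norm_ne_zero_iff.2 hx
    exact_mod_cast mul_ne_zero (by positivity) this
  have hfun : greenFn k = fun y : EuclideanSpace ℝ (Fin 3) =>
      -Complex.exp (Complex.I * k * (‖y‖ : ℂ)) * (((4 * Real.pi * ‖y‖ : ℝ) : ℂ))⁻¹ := by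
    funext y
    rw [greenFn, div_eq_mul_inv]
  rw [hfun]
  exact hexp.neg.mul (hden.inv h0)

/-- For every `k ∈ ℂ` and every `x ≠ 0` in ℝ³, the Green function `G^k` is smooth in a
neighborhood of `x` and satisfies the Helmholtz equation `Δ G^k(x) + k² G^k(x) = 0`. -/
theorem greenFn_smooth_and_helmholtz (k : ℂ) (x : EuclideanSpace ℝ (Fin 3)) (hx : x ≠ 0) :
    ContDiffAt ℝ (⊤ : ℕ∞) (greenFn k) x ∧ laplacian (greenFn k) x + k ^ 2 * greenFn k x = 0 := by
  refine ⟨green_contDiffAt k hx, ?_⟩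
  have hs := norm_sq_pos_of_ne hx
  have hlap : laplacian (greenFn k) x =
      6 * hAux1 k (‖x‖ ^ 2) + 4 * ((‖x‖ ^ 2 : ℝ) : ℂ) * hAux2 k (‖x‖ ^ 2) := by
    unfold laplacian
    rw [Finset.sum_congr rfl (fun i _ => second_deriv_green k hx i)]
    rw [Finset.sum_add_distrib, Finset.sum_const]
    have : ∑ i : Fin 3, ((2 * x i : ℝ) : ℂ) * (((2 * x i : ℝ) : ℂ) * hAux2 k (‖x‖ ^ 2)) =
        4 * ((‖x‖ ^ 2 : ℝ) : ℂ) * hAux2 k (‖x‖ ^ 2) := by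
      rw [← sum_coord_sq x]
      push_cast
      rw [Finset.mul_sum, Finset.sum_mul]
      exact Finset.sum_congr rfl fun i _ => by ring
    rw [this]
    simp
    ring
  rw [hlap, greenFn_eq_hAux]
  exact helmholtz_alg k hs
end

section
/- Let H and H₁ be complex Hilbert spaces, let T : H → H₁ be a bounded invertible linear operator, and let ψ₀ ∈ H and φ₀ ∈ H₁ be nonzero vectors satisfying T⁻¹ φ₀ = ‖ψ₀‖⁻² ψ₀ and (T*)⁻¹ ψ₀ = ‖φ₀‖⁻² φ₀. Let B : H → H₁ be a bounded linear operator with ‖T⁻¹ B‖ < 1. Then T + B is invertible and ‖ψ₀‖² ‖φ₀‖² ( ⟨(T + B)⁻¹ φ₀, ψ₀⟩ − 1 ) = Σ_{n=1}^∞ (−1)^n ⟨ B (T⁻¹ B)^{n−1} ψ₀, φ₀ ⟩, where the series converges absolutely; in particular the sum of this series equals −⟨Bψ₀, φ₀⟩ + ⟨B T⁻¹ B ψ₀, φ₀⟩ − ⟨B T⁻¹ B T⁻¹ B ψ₀, φ₀⟩ + E with |E| ≤ ‖ψ₀‖ ‖φ₀‖ ‖T⁻¹‖³ ‖B‖⁴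 / (1 − ‖T⁻¹B‖). -/
/-!
Write `T + B = T (1 + S)` with `S = T⁻¹ B`; the Neumann series gives `(T + B)⁻¹ T = Σ (-S)ⁿ`.
The condition on `T⁻¹ φ₀` turns `‖ψ₀‖² ⟨(T + B)⁻¹ φ₀, ψ₀⟩` into `⟨(1 + S)⁻¹ ψ₀, ψ₀⟩`, whose
`n = 0` term is `‖ψ₀‖²`, and the condition on `(T⁻¹)* ψ₀` turns
`‖φ₀‖² ⟨Sⁿ⁺¹ ψ₀, ψ₀⟩ = ‖φ₀‖² ⟨T⁻¹ B Sⁿ ψ₀, ψ₀⟩` into `⟨B Sⁿ ψ₀, φ₀⟩`. These terms are bounded by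
`‖φ₀‖ ‖B‖ ‖ψ₀‖ ‖S‖ⁿ`, so the tail after three terms is a geometric tail, and `‖S‖ ≤ ‖T⁻¹‖ ‖B‖`.
-/

open scoped InnerProductSpace
open Finset

theorem HasSum.norm_sub_sum_range_le_of_le_geometric {E : Type*} [SeminormedAddCommGroup E]
    {f : ℕ → E} {a : E} (hf : HasSum f a) {C r : ℝ} (hr : r < 1)
    (hfC : ∀ n, ‖f n‖ ≤ C * r ^ n) (k : ℕ) :
    ‖a - ∑ i ∈ range k, f i‖ ≤ C * r ^ k / (1 - r) := by
  rw [← dist_eq_norm, dist_comm]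
  refine dist_le_of_le_geometric_of_tendsto r C hr (fun n => ?_) hf.tendsto_sum_nat k
  simpa [dist_eq_norm, sum_range_succ] using hfC n

theorem ContinuousLinearMap.norm_pow_apply_le {𝕜 E : Type*} [NontriviallyNormedField 𝕜]
    [NormedAddCommGroup E] [NormedSpace 𝕜 E] (A : E →L[𝕜] E) (n : ℕ) (x : E) :
    ‖(A ^ n) x‖ ≤ ‖A‖ ^ n * ‖x‖ := by
  rcases n with _ | n
  · simp
  · exact ((A ^ (n + 1)).le_opNorm x).trans <|
      mul_le_mul_of_nonneg_right (norm_pow_le' A n.succ_pos) (norm_nonneg x)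

section Inner

variable {𝕜 E : Type*} [RCLike 𝕜] [NormedAddCommGroup E] [InnerProductSpace 𝕜 E]

theorem norm_sq_mul_inner_inv_norm_sq_smul_right (v w : E) :
    (‖v‖ : 𝕜) ^ 2 * ⟪v, ((‖v‖ : 𝕜) ^ 2)⁻¹ • w⟫_𝕜 = ⟪v, w⟫_𝕜 := by
  rcases eq_or_ne v 0 with rfl | hv
  · simp
  · rw [inner_smul_right, ← mul_assoc, mul_inv_cancel₀ (by simpa using hv), one_mul]

theorem norm_sq_mul_inner_inv_norm_sq_smul_left (v w : E) :
    (‖v‖ : 𝕜) ^ 2 * ⟪((‖v‖ : 𝕜) ^ 2)⁻¹ • v, w⟫_𝕜 = ⟪v, w⟫_𝕜 := by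
  rw [inner_smul_left, map_inv₀, map_pow, RCLike.conj_ofReal, ← inner_smul_right,
    norm_sq_mul_inner_inv_norm_sq_smul_right]

theorem norm_inner_apply_pow_apply_le {F : Type*} [NormedAddCommGroup F]
    [InnerProductSpace 𝕜 F] (φ : F) (B : E →L[𝕜] F) (S : E →L[𝕜] E) (ψ : E) (n : ℕ) :
    ‖⟪φ, B ((S ^ n) ψ)⟫_𝕜‖ ≤ ‖φ‖ * ‖B‖ * ‖ψ‖ * ‖S‖ ^ n :=
  calc ‖⟪φ, B ((S ^ n) ψ)⟫_𝕜‖ ≤ ‖φ‖ * (‖B‖ * (‖S‖ ^ n * ‖ψ‖)) := by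
        grw [norm_inner_le_norm, B.le_opNorm, S.norm_pow_apply_le]
    _ = ‖φ‖ * ‖B‖ * ‖ψ‖ * ‖S‖ ^ n := by ring

end Inner

namespace ContinuousLinearEquiv

section Neumann

variable {𝕜 E F : Type*} [NontriviallyNormedField 𝕜] [NormedAddCommGroup E] [NormedSpace 𝕜 E]
  [CompleteSpace E] [NormedAddCommGroup F] [NormedSpace 𝕜 F]
  (T : E ≃L[𝕜] F) (B : E →L[𝕜] F) (hB : ‖(T.symm : F →L[𝕜] E).comp B‖ < 1)

/-- `T + B = T (1 + T⁻¹ B)`, the factor `1 + T⁻¹ B` being inverted by its Neumann series. -/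
noncomputable def addOfNormLtOne : E ≃L[𝕜] F :=
  (unitsEquiv 𝕜 E (Units.oneSub (-(T.symm : F →L[𝕜] E).comp B) (by rwa [norm_neg]))).trans T

theorem coe_addOfNormLtOne : (T.addOfNormLtOne B hB : E →L[𝕜] F) = T + B := by
  ext x
  simp [addOfNormLtOne]

theorem hasSum_symm_addOfNormLtOne_apply (x : E) :
    HasSum (fun n => (-1 : 𝕜) ^ n • (((T.symm : F →L[𝕜] E).comp B) ^ n) x)
      ((T.addOfNormLtOne B hB).symm (T x)) := by
  set S := (T.symm : F →L[𝕜] E).comp B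
  have hS : ‖-S‖ < 1 := by rwa [norm_neg]
  convert (summable_geometric_of_norm_lt_one hS).hasSum.mapL
    (ContinuousLinearMap.apply 𝕜 E x) using 1
  · funext n
    rw [← neg_one_smul 𝕜 S, smul_pow]
    rfl
  · simp only [addOfNormLtOne, symm_trans_apply, symm_apply_apply, ContinuousLinearMap.apply_apply]
    rfl

end Neumann

section Hilbert

variable {𝕜 E F : Type*} [RCLike 𝕜] [NormedAddCommGroup E] [InnerProductSpace 𝕜 E]
  [CompleteSpace E] [NormedAddCommGroup F] [InnerProductSpace 𝕜 F] [CompleteSpace F]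
  (T : E ≃L[𝕜] F) (B : E →L[𝕜] F) (hB : ‖(T.symm : F →L[𝕜] E).comp B‖ < 1) {ψ : E} {φ : F}

theorem norm_sq_mul_inner_symm_apply
    (h : ContinuousLinearMap.adjoint (T.symm : F →L[𝕜] E) ψ = ((‖φ‖ : 𝕜) ^ 2)⁻¹ • φ) (w : F) :
    (‖φ‖ : 𝕜) ^ 2 * ⟪ψ, T.symm w⟫_𝕜 = ⟪φ, w⟫_𝕜 := by
  rw [← coe_coe, ← ContinuousLinearMap.adjoint_inner_left, h,
    norm_sq_mul_inner_inv_norm_sq_smul_left]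

theorem hasSum_reduced_scalar (h1 : T.symm φ = ((‖ψ‖ : 𝕜) ^ 2)⁻¹ • ψ)
    (h2 : ContinuousLinearMap.adjoint (T.symm : F →L[𝕜] E) ψ = ((‖φ‖ : 𝕜) ^ 2)⁻¹ • φ) :
    HasSum (fun n : ℕ => (-1 : 𝕜) ^ (n + 1) * ⟪φ, B ((((T.symm : F →L[𝕜] E).comp B) ^ n) ψ)⟫_𝕜)
      ((‖ψ‖ : 𝕜) ^ 2 * (‖φ‖ : 𝕜) ^ 2 * (⟪ψ, (T.addOfNormLtOne B hB).symm φ⟫_𝕜 - 1)) := by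
  have hsum := ((hasSum_nat_add_iff' 1).mpr
    ((T.hasSum_symm_addOfNormLtOne_apply B hB ψ).mapL (innerSL 𝕜 ψ))).mul_left ((‖φ‖ : 𝕜) ^ 2)
  set S := (T.symm : F →L[𝕜] E).comp B
  set e := T.addOfNormLtOne B hB
  have hψ : (‖ψ‖ : 𝕜) ^ 2 * ⟪ψ, e.symm φ⟫_𝕜 = ⟪ψ, e.symm (T ψ)⟫_𝕜 := by
    rw [← T.apply_symm_apply φ, h1, map_smul, map_smul, norm_sq_mul_inner_inv_norm_sq_smul_right]
  have hpow (n : ℕ) : (S ^ (n + 1)) ψ = T.symm (B ((S ^ n) ψ)) := by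
    rw [pow_succ']
    rfl
  have hterm (n : ℕ) : (‖φ‖ : 𝕜) ^ 2 * ⟪ψ, (-1 : 𝕜) ^ (n + 1) • (S ^ (n + 1)) ψ⟫_𝕜 =
      (-1 : 𝕜) ^ (n + 1) * ⟪φ, B ((S ^ n) ψ)⟫_𝕜 := by
    rw [inner_smul_right, hpow, mul_left_comm, norm_sq_mul_inner_symm_apply T h2]
  have hval : (‖ψ‖ : 𝕜) ^ 2 * (‖φ‖ : 𝕜) ^ 2 * (⟪ψ, e.symm φ⟫_𝕜 - 1) =
      (‖φ‖ : 𝕜) ^ 2 * (⟪ψ, e.symm (T ψ)⟫_𝕜 - ⟪ψ, (-1 : 𝕜) ^ 0 • (S ^ 0) ψ⟫_𝕜) := by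
    rw [← hψ, pow_zero, one_smul, pow_zero, one_apply_eq_self, inner_self_eq_norm_sq_to_K]
    ring
  simp only [innerSL_apply_apply, sum_range_one, hterm] at hsum
  rwa [hval]

end Hilbert

end ContinuousLinearEquiv

-- The paper's `⟨a, b⟩` is `⟪b, a⟫_ℂ` here: Mathlib's inner product is conjugate-linear on the left.
theorem neumann_series_reduced_scalar_general
    {H H₁ : Type*} [NormedAddCommGroup H] [InnerProductSpace ℂ H] [CompleteSpace H]
    [NormedAddCommGroup H₁] [InnerProductSpace ℂ H₁] [CompleteSpace H₁]
    (T : H ≃L[ℂ] H₁) (ψ₀ : H) (φ₀ : H₁)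
    (h1 : T.symm φ₀ = ((‖ψ₀‖ : ℂ) ^ 2)⁻¹ • ψ₀)
    (h2 : ContinuousLinearMap.adjoint (T.symm : H₁ →L[ℂ] H) ψ₀ = ((‖φ₀‖ : ℂ) ^ 2)⁻¹ • φ₀)
    (B : H →L[ℂ] H₁) (hB : ‖(T.symm : H₁ →L[ℂ] H).comp B‖ < 1) :
    ∃ e : H ≃L[ℂ] H₁, (e : H →L[ℂ] H₁) = (T : H →L[ℂ] H₁) + B ∧
      Summable (fun n : ℕ =>
        ‖⟪φ₀, B ((((T.symm : H₁ →L[ℂ] H).comp B) ^ n) ψ₀)⟫_ℂ‖) ∧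
      HasSum (fun n : ℕ =>
          (-1 : ℂ) ^ (n + 1) * ⟪φ₀, B ((((T.symm : H₁ →L[ℂ] H).comp B) ^ n) ψ₀)⟫_ℂ)
        ((‖ψ₀‖ : ℂ) ^ 2 * (‖φ₀‖ : ℂ) ^ 2 * (⟪ψ₀, e.symm φ₀⟫_ℂ - 1)) ∧
      ∃ E : ℂ,
        (‖ψ₀‖ : ℂ) ^ 2 * (‖φ₀‖ : ℂ) ^ 2 * (⟪ψ₀, e.symm φ₀⟫_ℂ - 1) =
          -⟪φ₀, B ψ₀⟫_ℂ + ⟪φ₀, B (T.symm (B ψ₀))⟫_ℂ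
            - ⟪φ₀, B (T.symm (B (T.symm (B ψ₀))))⟫_ℂ + E ∧
        ‖E‖ ≤ ‖ψ₀‖ * ‖φ₀‖ * ‖(T.symm : H₁ →L[ℂ] H)‖ ^ 3 * ‖B‖ ^ 4 /
          (1 - ‖(T.symm : H₁ →L[ℂ] H).comp B‖) := by
  have hsum := T.hasSum_reduced_scalar B hB h1 h2
  set S := (T.symm : H₁ →L[ℂ] H).comp B
  set A := (‖ψ₀‖ : ℂ) ^ 2 * (‖φ₀‖ : ℂ) ^ 2 * (⟪ψ₀, (T.addOfNormLtOne B hB).symm φ₀⟫_ℂ - 1)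
  have hbound (n : ℕ) : ‖(-1 : ℂ) ^ (n + 1) * ⟪φ₀, B ((S ^ n) ψ₀)⟫_ℂ‖ ≤
      ‖φ₀‖ * ‖B‖ * ‖ψ₀‖ * ‖S‖ ^ n := by
    simpa using norm_inner_apply_pow_apply_le φ₀ B S ψ₀ n
  have hfirst : ∑ n ∈ range 3, (-1 : ℂ) ^ (n + 1) * ⟪φ₀, B ((S ^ n) ψ₀)⟫_ℂ =
      -⟪φ₀, B ψ₀⟫_ℂ + ⟪φ₀, B (T.symm (B ψ₀))⟫_ℂ - ⟪φ₀, B (T.symm (B (T.symm (B ψ₀))))⟫_ℂ := by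
    simp only [sum_range_succ, sum_range_zero, pow_succ, pow_zero, one_mul,
      mul_apply_eq_comp, one_apply_eq_self, S,
      ContinuousLinearMap.comp_apply, ContinuousLinearEquiv.coe_coe]
    ring
  refine ⟨T.addOfNormLtOne B hB, T.coe_addOfNormLtOne B hB,
    .of_nonneg_of_le (fun _ => norm_nonneg _) (fun n => norm_inner_apply_pow_apply_le φ₀ B S ψ₀ n)
      ((summable_geometric_of_lt_one (norm_nonneg S) hB).mul_left _),
    hsum, A - ∑ n ∈ range 3, (-1 : ℂ) ^ (n + 1) * ⟪φ₀, B ((S ^ n) ψ₀)⟫_ℂ, by rw [hfirst]; ring, ?_⟩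
  calc _ ≤ ‖φ₀‖ * ‖B‖ * ‖ψ₀‖ * ‖S‖ ^ 3 / (1 - ‖S‖) :=
        hsum.norm_sub_sum_range_le_of_le_geometric hB hbound 3
    _ ≤ ‖φ₀‖ * ‖B‖ * ‖ψ₀‖ * (‖(T.symm : H₁ →L[ℂ] H)‖ * ‖B‖) ^ 3 / (1 - ‖S‖) := by
        have hS : 0 < 1 - ‖S‖ := sub_pos.2 hB
        gcongr
        exact ContinuousLinearMap.opNorm_comp_le _ _
    _ = _ := by ring

/-- Neumann-series expansion of the reduced scalar function. Let `T : H ≃ H₁` be a bounded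
invertible operator between complex Hilbert spaces, `ψ₀, φ₀` nonzero vectors with
`T⁻¹ φ₀ = ‖ψ₀‖⁻² ψ₀` and `(T*)⁻¹ ψ₀ = (T⁻¹)* ψ₀ = ‖φ₀‖⁻² φ₀`, and `B` a bounded operator
with `‖T⁻¹ B‖ < 1`. Then `T + B` is invertible and
`‖ψ₀‖² ‖φ₀‖² (⟨(T+B)⁻¹ φ₀, ψ₀⟩ − 1) = Σ_{n≥1} (−1)^n ⟨B (T⁻¹B)^{n−1} ψ₀, φ₀⟩`,
the series converging absolutely; moreover the sum equals
`−⟨Bψ₀,φ₀⟩ + ⟨BT⁻¹Bψ₀,φ₀⟩ − ⟨BT⁻¹BT⁻¹Bψ₀,φ₀⟩ + E` with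
`|E| ≤ ‖ψ₀‖‖φ₀‖‖T⁻¹‖³‖B‖⁴/(1 − ‖T⁻¹B‖)`. (Recall `⟨a, b⟩ = ⟪b, a⟫_ℂ` in Mathlib's
convention, the inner product here being conjugate-linear in the second argument.) -/
theorem neumann_series_reduced_scalar
    {H H₁ : Type*} [NormedAddCommGroup H] [InnerProductSpace ℂ H] [CompleteSpace H]
    [NormedAddCommGroup H₁] [InnerProductSpace ℂ H₁] [CompleteSpace H₁]
    (T : H ≃L[ℂ] H₁) (ψ₀ : H) (φ₀ : H₁) (hψ : ψ₀ ≠ 0) (hφ : φ₀ ≠ 0)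
    (h1 : T.symm φ₀ = ((‖ψ₀‖ : ℂ) ^ 2)⁻¹ • ψ₀)
    (h2 : ContinuousLinearMap.adjoint (T.symm : H₁ →L[ℂ] H) ψ₀ = ((‖φ₀‖ : ℂ) ^ 2)⁻¹ • φ₀)
    (B : H →L[ℂ] H₁) (hB : ‖(T.symm : H₁ →L[ℂ] H).comp B‖ < 1) :
    ∃ e : H ≃L[ℂ] H₁, (e : H →L[ℂ] H₁) = (T : H →L[ℂ] H₁) + B ∧
      Summable (fun n : ℕ =>
        ‖⟪φ₀, B ((((T.symm : H₁ →L[ℂ] H).comp B) ^ n) ψ₀)⟫_ℂ‖) ∧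
      HasSum (fun n : ℕ =>
          (-1 : ℂ) ^ (n + 1) * ⟪φ₀, B ((((T.symm : H₁ →L[ℂ] H).comp B) ^ n) ψ₀)⟫_ℂ)
        ((‖ψ₀‖ : ℂ) ^ 2 * (‖φ₀‖ : ℂ) ^ 2 * (⟪ψ₀, e.symm φ₀⟫_ℂ - 1)) ∧
      ∃ E : ℂ,
        (‖ψ₀‖ : ℂ) ^ 2 * (‖φ₀‖ : ℂ) ^ 2 * (⟪ψ₀, e.symm φ₀⟫_ℂ - 1) =
          -⟪φ₀, B ψ₀⟫_ℂ + ⟪φ₀, B (T.symm (B ψ₀))⟫_ℂ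
            - ⟪φ₀, B (T.symm (B (T.symm (B ψ₀))))⟫_ℂ + E ∧
        ‖E‖ ≤ ‖ψ₀‖ * ‖φ₀‖ * ‖(T.symm : H₁ →L[ℂ] H)‖ ^ 3 * ‖B‖ ^ 4 /
          (1 - ‖(T.symm : H₁ →L[ℂ] H).comp B‖) :=
  neumann_series_reduced_scalar_general T ψ₀ φ₀ h1 h2 B hB
end

section
/- Let A, C, M, r₀, δ₀ > 0 and B, E ∈ ℝ, and suppose f : ℂ × (0, δ₀) → ℂ has the form f(ω, δ) = −A ω² − i B ω³ + C δ + i E ω δ + r(ω, δ), where |r(ω, δ)| ≤ M (|ω|⁴ + δ |ω|² + δ²) whenever |ω| ≤ r₀ and 0 < δ < δ₀. Then there exist ε > 0 and constants c₁, c₂ > 0 such that for every δ ∈ (0, ε) and every ω ∈ ℂ with |ω| ≤ ε and f(ω, δ) = 0, one has c₁ δ ≤ |ω|² ≤ c₂ δ. -/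
/-!
At a zero, `Aω² - Cδ = -iBω³ + iEωδ + r(ω, δ)`. With `x = |ω|` and `x, δ ≤ ε ≤ 1`, every term on the
right is at most `ε` times `x²` or `δ`, so for small `ε` the right side is bounded by
`(A/2) x² + (C/2) δ`. Then `|A x² - C δ| ≤ (A/2) x² + (C/2) δ` forces `A x²` and `C δ` to agree
up to a factor `3`.
-/

open Filter Topology

theorem le_and_le_of_abs_sub_le_half {a c y δ : ℝ} (ha : 0 < a)
    (h : |a * y - c * δ| ≤ a / 2 * y + c / 2 * δ) :
    c / (3 * a) * δ ≤ y ∧ y ≤ 3 * c / a * δ := by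
  obtain ⟨h₁, h₂⟩ := abs_le.mp h
  constructor
  · rw [div_mul_eq_mul_div, div_le_iff₀ (by positivity)]
    linarith
  · rw [div_mul_eq_mul_div, le_div_iff₀ ha]
    linarith

theorem higher_order_terms_le {b e m x δ ε : ℝ} (hb : 0 ≤ b) (he : 0 ≤ e) (hm : 0 ≤ m)
    (hx : 0 ≤ x) (hxε : x ≤ ε) (hδ : 0 ≤ δ) (hδε : δ ≤ ε) (hε : ε ≤ 1) :
    b * x ^ 3 + e * x * δ + m * (x ^ 4 + δ * x ^ 2 + δ ^ 2)
      ≤ (b + 2 * m) * ε * x ^ 2 + (e + m) * ε * δ := by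
  have h₃ : x ^ 3 ≤ ε * x ^ 2 := by nlinarith [sq_nonneg x]
  have h₄ : x ^ 4 ≤ ε * x ^ 2 := by nlinarith [pow_nonneg hx 3]
  have hδx : δ * x ^ 2 ≤ ε * x ^ 2 := by nlinarith [sq_nonneg x]
  have hxδ : x * δ ≤ ε * δ := by nlinarith
  have hδδ : δ ^ 2 ≤ ε * δ := by nlinarith
  nlinarith [mul_le_mul_of_nonneg_left h₃ hb, mul_le_mul_of_nonneg_left hxδ he,
    mul_le_mul_of_nonneg_left (add_le_add (add_le_add h₄ hδx) hδδ) hm]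

theorem abs_sub_le_of_eq_zero {a b c e δ : ℝ} {ω ρ : ℂ} (ha : 0 ≤ a) (hc : 0 ≤ c) (hδ : 0 ≤ δ)
    (h : -(a : ℂ) * ω ^ 2 - Complex.I * b * ω ^ 3 + c * δ + Complex.I * e * ω * δ + ρ = 0) :
    |a * ‖ω‖ ^ 2 - c * δ| ≤ |b| * ‖ω‖ ^ 3 + |e| * ‖ω‖ * δ + ‖ρ‖ := by
  have heq : (a : ℂ) * ω ^ 2 - c * δ = -(Complex.I * b * ω ^ 3) + Complex.I * e * ω * δ + ρ := by
    linear_combination -h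
  calc |a * ‖ω‖ ^ 2 - c * δ| = |‖(a : ℂ) * ω ^ 2‖ - ‖(c : ℂ) * δ‖| := by
        simp [abs_of_nonneg ha, abs_of_nonneg hc, abs_of_nonneg hδ]
    _ ≤ ‖(a : ℂ) * ω ^ 2 - c * δ‖ := abs_norm_sub_norm_le _ _
    _ ≤ |b| * ‖ω‖ ^ 3 + |e| * ‖ω‖ * δ + ‖ρ‖ := by
        rw [heq]
        exact norm_add₃_le.trans_eq (by simp [abs_of_nonneg hδ])

theorem eventually_const_mul_le (k : ℝ) {c : ℝ} (hc : 0 < c) : ∀ᶠ ε in 𝓝 (0 : ℝ), k * ε ≤ c :=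
  (continuous_const_mul k).tendsto' 0 0 (mul_zero k) |>.eventually (eventually_le_nhds hc)

/-- Let `f(ω, δ) = −Aω² − iBω³ + Cδ + iEωδ + r(ω, δ)` with `A, C > 0` and a remainder
bounded by `M(|ω|⁴ + δ|ω|² + δ²)` for `|ω| ≤ r₀` and `0 < δ < δ₀`. Then there exist
`ε > 0` and constants `c₁, c₂ > 0` such that every zero `ω` of `f(·, δ)` with `|ω| ≤ ε`
and `δ ∈ (0, ε)` satisfies `c₁ δ ≤ |ω|² ≤ c₂ δ`. -/
theorem zeros_order_sqrt_delta
    (A C M r₀ δ₀ : ℝ) (B E : ℝ)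
    (hA : 0 < A) (hC : 0 < C) (hM : 0 < M) (hr₀ : 0 < r₀) (hδ₀ : 0 < δ₀)
    (f r : ℂ → ℝ → ℂ)
    (hf : ∀ (ω : ℂ) (δ : ℝ), 0 < δ → δ < δ₀ →
      f ω δ = -(A : ℂ) * ω ^ 2 - Complex.I * (B : ℂ) * ω ^ 3 + (C : ℂ) * (δ : ℂ)
        + Complex.I * (E : ℂ) * ω * (δ : ℂ) + r ω δ)
    (hr : ∀ (ω : ℂ) (δ : ℝ), ‖ω‖ ≤ r₀ → 0 < δ → δ < δ₀ →
      ‖r ω δ‖ ≤ M * (‖ω‖ ^ 4 + δ * ‖ω‖ ^ 2 + δ ^ 2)) :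
    ∃ ε > 0, ∃ c₁ > 0, ∃ c₂ > 0, ∀ δ : ℝ, 0 < δ → δ < ε →
      ∀ ω : ℂ, ‖ω‖ ≤ ε → f ω δ = 0 → c₁ * δ ≤ ‖ω‖ ^ 2 ∧ ‖ω‖ ^ 2 ≤ c₂ * δ := by
  obtain ⟨ε, hε, hε₁, hεδ₀, hεr₀, hεA, hεC⟩ : ∃ ε > 0, ε ≤ 1 ∧ ε ≤ δ₀ ∧ ε ≤ r₀ ∧
      (|B| + 2 * M) * ε ≤ A / 2 ∧ (|E| + M) * ε ≤ C / 2 :=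
    ((eventually_le_nhds one_pos).and <| (eventually_le_nhds hδ₀).and <|
      (eventually_le_nhds hr₀).and <| (eventually_const_mul_le _ (half_pos hA)).and
        (eventually_const_mul_le _ (half_pos hC)))
      |>.filter_mono nhdsWithin_le_nhds |>.and (self_mem_nhdsWithin (s := Set.Ioi 0)) |>.exists
      |>.imp fun _ ⟨hsmall, hpos⟩ => ⟨hpos, hsmall⟩
  refine ⟨ε, hε, C / (3 * A), by positivity, 3 * C / A, by positivity,
    fun δ hδ hδε ω hωε hzero => le_and_le_of_abs_sub_le_half hA ?_⟩
  have hδδ₀ : δ < δ₀ := hδε.trans_le hεδ₀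
  rw [hf ω δ hδ hδδ₀] at hzero
  calc |A * ‖ω‖ ^ 2 - C * δ| ≤ |B| * ‖ω‖ ^ 3 + |E| * ‖ω‖ * δ + ‖r ω δ‖ :=
        abs_sub_le_of_eq_zero hA.le hC.le hδ.le hzero
    _ ≤ |B| * ‖ω‖ ^ 3 + |E| * ‖ω‖ * δ + M * (‖ω‖ ^ 4 + δ * ‖ω‖ ^ 2 + δ ^ 2) := by
        gcongr
        exact hr ω δ (hωε.trans hεr₀) hδ hδδ₀
    _ ≤ (|B| + 2 * M) * ε * ‖ω‖ ^ 2 + (|E| + M) * ε * δ :=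
        higher_order_terms_le (abs_nonneg B) (abs_nonneg E) hM.le (norm_nonneg ω) hωε hδ.le
          hδε.le hε₁
    _ ≤ A / 2 * ‖ω‖ ^ 2 + C / 2 * δ := by gcongr
end

section
/- Let A, C, M, r₀, δ₀ > 0 and B, E ∈ ℝ with A E = B C, and suppose f : ℂ × (0, δ₀) → ℂ has the form f(ω, δ) = −A ω² − i B ω³ + C δ + i E ω δ + r(ω, δ), where |r(ω, δ)| ≤ M (|ω|⁴ + δ |ω|² + δ²) whenever |ω| ≤ r₀ and 0 < δ < δ₀. Then there exist ε > 0 and M′ > 0 such that for every δ ∈ (0, ε) and every ω ∈ ℂ with |ω| ≤ ε and f(ω, δ) = 0, one has min( |ω − √(Cδ/A)| , |ω + √(Cδ/A)| ) ≤ M′ δ^{3/2}. -/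
/-!
When `A E = B C` the principal part of `f` factors as `-(A + iBω)(ω² - Cδ/A)`, so at a zero
`(A + iBω)(ω² - Cδ/A) = r(ω, δ)`. For small `ω` the first factor has modulus at least `A/2`,
hence `|ω² - Cδ/A| ≤ (2M/A)(|ω|⁴ + δ|ω|² + δ²)`. Feeding this back once gives `|ω|² = O(δ)`,
and then `|ω² - Cδ/A| = O(δ²)`. Finally `ω² - s² = (ω - s)(ω + s)` with `s = √(Cδ/A)`, and the
two factors differ by `2s`, so the smaller one is at most `O(δ²)/s = O(δ^{3/2})`.
-/

open Complex

theorem min_norm_sub_norm_add_mul_sqrt_le {𝕜 : Type*} [RCLike 𝕜] (z : 𝕜) {t : ℝ} (ht : 0 ≤ t) :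
    min ‖z - (√t : 𝕜)‖ ‖z + (√t : 𝕜)‖ * √t ≤ ‖z ^ 2 - (t : 𝕜)‖ := by
  set s : 𝕜 := (√t : 𝕜)
  have hs : ‖s‖ = √t := by rw [RCLike.norm_ofReal, abs_of_nonneg (Real.sqrt_nonneg t)]
  have hsum : 2 * ‖s‖ ≤ ‖z - s‖ + ‖z + s‖ := by
    have h := norm_sub_le (z + s) (z - s)
    rwa [show z + s - (z - s) = (2 : 𝕜) * s by ring, norm_mul, RCLike.norm_two, add_comm] at h
  rw [← hs, show (t : 𝕜) = s ^ 2 by rw [← RCLike.ofReal_pow, Real.sq_sqrt ht],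
    show z ^ 2 - s ^ 2 = (z - s) * (z + s) by ring, norm_mul]
  rcases le_total ‖z - s‖ ‖z + s‖ with h | h
  · rw [min_eq_left h]
    exact mul_le_mul_of_nonneg_left (by linarith) (norm_nonneg _)
  · rw [min_eq_right h, mul_comm ‖z - s‖]
    exact mul_le_mul_of_nonneg_left (by linarith) (norm_nonneg _)

theorem minnaert_factorization {A B C E δ r ω : ℂ} (hA : A ≠ 0) (hcompat : A * E = B * C)
    (h : -A * ω ^ 2 - I * B * ω ^ 3 + C * δ + I * E * ω * δ + r = 0) :
    (A + I * B * ω) * (ω ^ 2 - C * δ / A) = r := by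
  field_simp
  linear_combination (-A) * h + I * ω * δ * hcompat

theorem half_mul_norm_sq_sub_le_of_minnaert_eq {A B C E δ : ℝ} {ω r : ℂ} (hA : 0 < A)
    (hcompat : A * E = B * C) (hω : 2 * |B| * ‖ω‖ ≤ A)
    (h : -(A : ℂ) * ω ^ 2 - I * B * ω ^ 3 + C * δ + I * E * ω * δ + r = 0) :
    A / 2 * ‖ω ^ 2 - ((C * δ / A : ℝ) : ℂ)‖ ≤ ‖r‖ := by
  have hfactor : ((A : ℂ) + I * B * ω) * (ω ^ 2 - ((C * δ / A : ℝ) : ℂ)) = r := by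
    push_cast
    exact minnaert_factorization (ofReal_ne_zero.mpr hA.ne') (by exact_mod_cast hcompat) h
  have hfactor_ge : A / 2 ≤ ‖(A : ℂ) + I * B * ω‖ := by
    have := norm_le_add_norm_add (A : ℂ) (I * B * ω)
    simp only [norm_mul, norm_real, Real.norm_of_nonneg hA.le, norm_I, one_mul,
      Real.norm_eq_abs] at this
    linarith
  rw [← hfactor, norm_mul]
  exact mul_le_mul_of_nonneg_right hfactor_ge (norm_nonneg _)

theorem sq_le_of_sq_le_add_quartic {x t c δ : ℝ}
    (h : x ^ 2 ≤ t + c * (x ^ 4 + δ * x ^ 2 + δ ^ 2)) (hsmall : c * (x ^ 2 + δ) ≤ 1 / 2) :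
    x ^ 2 ≤ 2 * (t + c * δ ^ 2) := by
  nlinarith [mul_le_mul_of_nonneg_right hsmall (sq_nonneg x)]

theorem norm_sq_sub_le_of_le_quartic {𝕜 : Type*} [NormedField 𝕜] {z t : 𝕜} {c k δ : ℝ}
    (hc : 0 ≤ c) (hδ : 0 ≤ δ) (hδ1 : δ ≤ 1) (ht : ‖t‖ ≤ k * δ)
    (h : ‖z ^ 2 - t‖ ≤ c * (‖z‖ ^ 4 + δ * ‖z‖ ^ 2 + δ ^ 2))
    (hsmall : c * (‖z‖ ^ 2 + δ) ≤ 1 / 2) :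
    ‖z ^ 2 - t‖ ≤ c * ((2 * (k + c)) ^ 2 + 2 * (k + c) + 1) * δ ^ 2 := by
  have hz : ‖z‖ ^ 2 ≤ 2 * (k + c) * δ := by
    have h₁ : ‖z‖ ^ 2 ≤ ‖t‖ + c * (‖z‖ ^ 4 + δ * ‖z‖ ^ 2 + δ ^ 2) := by
      have := norm_le_norm_add_norm_sub' (z ^ 2) t
      rw [norm_pow] at this
      linarith
    have h₂ := sq_le_of_sq_le_add_quartic h₁ hsmall
    nlinarith [mul_le_mul_of_nonneg_left (pow_le_pow_of_le_one hδ hδ1 one_le_two) hc]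
  calc ‖z ^ 2 - t‖ ≤ c * (‖z‖ ^ 4 + δ * ‖z‖ ^ 2 + δ ^ 2) := h
    _ ≤ c * ((2 * (k + c) * δ) ^ 2 + δ * (2 * (k + c) * δ) + δ ^ 2) := by
      gcongr
      · rw [show ‖z‖ ^ 4 = (‖z‖ ^ 2) ^ 2 by ring]
        gcongr
    _ = c * ((2 * (k + c)) ^ 2 + 2 * (k + c) + 1) * δ ^ 2 := by ring

theorem rpow_three_halves_mul_sqrt {δ : ℝ} (k : ℝ) (hδ : 0 < δ) :
    δ ^ ((3 : ℝ) / 2) * √(k * δ) = √k * δ ^ 2 := by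
  rw [Real.sqrt_mul' k hδ.le, Real.sqrt_eq_rpow δ, mul_left_comm, ← Real.rpow_add hδ]
  norm_num

/-- Let `f(ω, δ) = −Aω² − iBω³ + Cδ + iEωδ + r(ω, δ)` with `A, C > 0`, the compatibility
condition `A E = B C`, and a remainder bounded by `M(|ω|⁴ + δ|ω|² + δ²)` for `|ω| ≤ r₀`
and `0 < δ < δ₀`. Then there exist `ε > 0` and `M′ > 0` such that every zero `ω` of
`f(·, δ)` with `|ω| ≤ ε` and `δ ∈ (0, ε)` satisfies
`min(|ω − √(Cδ/A)|, |ω + √(Cδ/A)|) ≤ M′ δ^{3/2}`. -/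
theorem zeros_close_to_minnaert
    (A C M r₀ δ₀ : ℝ) (B E : ℝ)
    (hA : 0 < A) (hC : 0 < C) (hM : 0 < M) (hr₀ : 0 < r₀) (hδ₀ : 0 < δ₀)
    (hcompat : A * E = B * C)
    (f r : ℂ → ℝ → ℂ)
    (hf : ∀ (ω : ℂ) (δ : ℝ), 0 < δ → δ < δ₀ →
      f ω δ = -(A : ℂ) * ω ^ 2 - Complex.I * (B : ℂ) * ω ^ 3 + (C : ℂ) * (δ : ℂ)
        + Complex.I * (E : ℂ) * ω * (δ : ℂ) + r ω δ)
    (hr : ∀ (ω : ℂ) (δ : ℝ), ‖ω‖ ≤ r₀ → 0 < δ → δ < δ₀ →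
      ‖r ω δ‖ ≤ M * (‖ω‖ ^ 4 + δ * ‖ω‖ ^ 2 + δ ^ 2)) :
    ∃ ε > 0, ∃ M' > 0, ∀ δ : ℝ, 0 < δ → δ < ε →
      ∀ ω : ℂ, ‖ω‖ ≤ ε → f ω δ = 0 →
        min ‖ω - (Real.sqrt (C * δ / A) : ℂ)‖ ‖ω + (Real.sqrt (C * δ / A) : ℂ)‖ ≤
          M' * δ ^ ((3 : ℝ) / 2) := by
  obtain ⟨c, hc⟩ : ∃ c, c = 2 * M / A := ⟨_, rfl⟩
  obtain ⟨k, hk⟩ : ∃ k, k = C / A := ⟨_, rfl⟩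
  have hk0 : 0 < k := hk ▸ by positivity
  -- `ε ≤ A / (8M + 2|B|)` gives both `|A + iBω| ≥ A/2` and `(2M/A)(|ω|² + δ) ≤ 1/2`.
  refine ⟨min (min δ₀ r₀) (min 1 (A / (8 * M + 2 * |B|))), by positivity,
    c * ((2 * (k + c)) ^ 2 + 2 * (k + c) + 1) / √k, hc ▸ by positivity, ?_⟩
  intro δ hδ hδε ω hωε hfω
  simp only [lt_min_iff, le_min_iff] at hδε hωε
  obtain ⟨⟨hδδ₀, -⟩, hδ1, hδA⟩ := hδε
  obtain ⟨⟨-, hωr₀⟩, hω1, hωA⟩ := hωε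
  rw [le_div_iff₀ (by positivity)] at hωA
  rw [lt_div_iff₀ (by positivity)] at hδA
  have hkδ : C * δ / A = k * δ := by rw [hk]; ring
  have hquad : ‖ω ^ 2 - ((k * δ : ℝ) : ℂ)‖ ≤ c * (‖ω‖ ^ 4 + δ * ‖ω‖ ^ 2 + δ ^ 2) := by
    have h := half_mul_norm_sq_sub_le_of_minnaert_eq hA hcompat
      (by nlinarith [norm_nonneg ω]) ((hf ω δ hδ hδδ₀).symm.trans hfω)
    rw [hkδ] at h
    rw [hc, div_mul_eq_mul_div, le_div_iff₀ hA]
    linarith [hr ω δ hωr₀ hδ hδδ₀]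
  have hsmall : c * (‖ω‖ ^ 2 + δ) ≤ 1 / 2 := by
    rw [hc, div_mul_eq_mul_div, div_le_iff₀ hA]
    nlinarith [norm_nonneg ω, abs_nonneg B]
  have hbound := norm_sq_sub_le_of_le_quartic (hc ▸ by positivity) hδ.le hδ1.le
    (by rw [norm_real, Real.norm_of_nonneg (by positivity)]) hquad hsmall
  have hmin := min_norm_sub_norm_add_mul_sqrt_le ω (by positivity : 0 ≤ k * δ)
  rw [hkδ]
  refine le_of_mul_le_mul_right ?_ (Real.sqrt_pos.mpr (by positivity : 0 < k * δ))
  rw [mul_assoc, rpow_three_halves_mul_sqrt k hδ, ← mul_assoc,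
    div_mul_cancel₀ _ (Real.sqrt_pos.mpr hk0).ne']
  exact hmin.trans hbound
end
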